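/- Let B₄ be the group with presentation ⟨σ₁, σ₂, σ₃ | σ₁σ₃ = σ₃σ₁, σ₁σ₂σ₁ = σ₂σ₁σ₂, σ₂σ₃σ₂ = σ₃σ₂σ₃⟩ (the braid group on four strands). Since B₄'/B₄'' is torsion-free, the second term of the rational derived series coincides with the second derived subgroup: (B₄)_r^{(2)} = [[B₄,B₄],[B₄,B₄]]. -/

import Mathlib

/-- One step of the rational derived series: for a subgroup `H` of `G`, the next term is
the set of elements of `H` whose image in the abelianization `H/[H,H]` is torsion,
i.e. the preimage in `H` of the torsion subgroup of the abelianization of `H`,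
regarded as a subgroup of `G`. -/
def rdsSucc {G : Type*} [Group G] (H : Subgroup G) : Subgroup G :=
  ((CommGroup.torsion (Abelianization H)).comap Abelianization.of).map H.subtype

/-- The rational derived series of a group `G`. -/
def rds (G : Type*) [Group G] : ℕ → Subgroup G
  | 0 => ⊤
  | n + 1 => rdsSucc (rds G n)

theorem rdsSucc_normal {G : Type*} [Group G] (H : Subgroup G) [H.Normal] :
    (rdsSucc H).Normal := by
  constructor
  intro x hx c
  rw [rdsSucc, Subgroup.mem_map] at hx ⊢
  obtain ⟨y, hy, rfl⟩ := hx
  rw [Subgroup.mem_comap, CommGroup.mem_torsion, isOfFinOrder_iff_pow_eq_one] at hy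
  obtain ⟨m, hm, hym⟩ := hy
  have hker : ∀ z : H, Abelianization.of z = 1 ↔ z ∈ commutator H := fun z =>
    QuotientGroup.eq_one_iff z
  have hym' : y ^ m ∈ commutator ↥H := by
    rw [← hker]
    rw [← map_pow] at hym
    exact hym
  have hcomm : Subgroup.map H.subtype (commutator ↥H) = ⁅H, H⁆ := by
    rw [commutator, Subgroup.map_commutator, ← MonoidHom.range_eq_map, Subgroup.range_subtype]
  have hmemH : c * (H.subtype y) * c⁻¹ ∈ H := Subgroup.Normal.conj_mem ‹H.Normal› _ y.2 c
  refine ⟨⟨c * (H.subtype y) * c⁻¹, hmemH⟩, ?_, rfl⟩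
  rw [Subgroup.mem_comap, CommGroup.mem_torsion, isOfFinOrder_iff_pow_eq_one]
  refine ⟨m, hm, ?_⟩
  rw [← map_pow, hker]
  have h1 : H.subtype ((⟨c * (H.subtype y) * c⁻¹, hmemH⟩ : H) ^ m)
      = c * (H.subtype (y ^ m)) * c⁻¹ := by
    rw [map_pow, map_pow]
    exact conj_pow
  have h2 : H.subtype ((⟨c * (H.subtype y) * c⁻¹, hmemH⟩ : H) ^ m)
      ∈ Subgroup.map H.subtype (commutator ↥H) := by
    rw [hcomm, h1]
    exact Subgroup.Normal.conj_mem inferInstance _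
      (by rw [← hcomm]; exact Subgroup.mem_map_of_mem _ hym') c
  rwa [Subgroup.mem_map_iff_mem (Subgroup.subtype_injective H)] at h2

instance rds_normal (G : Type*) [Group G] (n : ℕ) : (rds G n).Normal := by
  induction n with
  | zero => rw [show rds G 0 = ⊤ from rfl]; infer_instance
  | succ n ih => exact rdsSucc_normal (rds G n)

instance rds_subgroupOf_normal (G : Type*) [Group G] (n i : ℕ) :
    ((rds G n).subgroupOf (rds G i)).Normal :=
  (rds_normal G n).subgroupOf _

/-- The relators of the presentation
`⟨σ₁, σ₂, σ₃ | σ₁σ₃ = σ₃σ₁, σ₁σ₂σ₁ = σ₂σ₁σ₂, σ₂σ₃σ₂ = σ₃σ₂σ₃⟩` of the braid group `B₄`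
on four strands (generator `i : Fin 3` corresponds to `σ_{i+1}`). -/
def braidRels : Set (FreeGroup (Fin 3)) :=
  {FreeGroup.of 0 * FreeGroup.of 2 * (FreeGroup.of 2 * FreeGroup.of 0)⁻¹,
   FreeGroup.of 0 * FreeGroup.of 1 * FreeGroup.of 0 *
      (FreeGroup.of 1 * FreeGroup.of 0 * FreeGroup.of 1)⁻¹,
   FreeGroup.of 1 * FreeGroup.of 2 * FreeGroup.of 1 *
      (FreeGroup.of 2 * FreeGroup.of 1 * FreeGroup.of 2)⁻¹}

/-- The braid group on four strands, via the above presentation. -/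
def B4 : Type := PresentedGroup braidRels

instance : Group B4 := by unfold B4; infer_instance

/-- `σᵢ` in `B₄` (for `i : Fin 3`). -/
def sigma (i : Fin 3) : B4 := PresentedGroup.of i

/-- `p = σ₂σ₁⁻¹`. -/
def pElt : B4 := sigma 1 * (sigma 0)⁻¹

/-- `q = σ₁σ₂σ₁⁻²`. -/
def qElt : B4 := sigma 0 * sigma 1 * (sigma 0)⁻¹ * (sigma 0)⁻¹

namespace Braid4Aux

open Subgroup Multiplicative
open scoped commutatorElement

/-! ### Generalities -/

theorem map_subtype_commutator {G : Type*} [Group G] (H : Subgroup G) :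
    Subgroup.map H.subtype (commutator ↥H) = ⁅H, H⁆ := by
  rw [commutator_def, Subgroup.map_commutator, ← MonoidHom.range_eq_map, Subgroup.range_subtype]

theorem tf_of_injective {G H' : Type*} [Group G] [Group H'] {f : G →* H'}
    (hf : Function.Injective f) (h : (∀ g : H', g ≠ 1 → ¬IsOfFinOrder g)) : (∀ g : G, g ≠ 1 → ¬IsOfFinOrder g) := by
  intro g hg hfin
  exact h (f g) (fun e => hg (hf (by rw [e, map_one]))) (f.isOfFinOrder hfin)

theorem tfMultZ : (∀ g : Multiplicative ℤ, g ≠ 1 → ¬IsOfFinOrder g) := by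
  intro g hg hfin
  obtain ⟨n, hn, he⟩ := isOfFinOrder_iff_pow_eq_one.mp hfin
  apply hg
  have h1 := congrArg Multiplicative.toAdd he
  rw [toAdd_pow, toAdd_one, nsmul_eq_mul] at h1
  rcases mul_eq_zero.mp h1 with h | h
  · exact absurd (Int.natCast_eq_zero.mp h) hn.ne'
  · rw [← ofAdd_toAdd g, h, ofAdd_zero]

theorem tfMultZZ : (∀ g : Multiplicative (ℤ × ℤ), g ≠ 1 → ¬IsOfFinOrder g) := by
  intro g hg hfin
  obtain ⟨n, hn, he⟩ := isOfFinOrder_iff_pow_eq_one.mp hfin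
  apply hg
  have h1 := congrArg Multiplicative.toAdd he
  rw [toAdd_pow, toAdd_one] at h1
  have h2 : g.toAdd.1 = 0 := by
    have := congrArg Prod.fst h1
    rw [Prod.smul_fst, nsmul_eq_mul] at this
    rcases mul_eq_zero.mp this with h | h
    · exact absurd (Int.natCast_eq_zero.mp h) hn.ne'
    · exact h
  have h3 : g.toAdd.2 = 0 := by
    have := congrArg Prod.snd h1
    rw [Prod.smul_snd, nsmul_eq_mul] at this
    rcases mul_eq_zero.mp this with h | h
    · exact absurd (Int.natCast_eq_zero.mp h) hn.ne'
    · exact h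
  have h4 : g.toAdd = 0 := Prod.ext h2 h3
  rw [← ofAdd_toAdd g, h4, ofAdd_zero]

theorem rdsSucc_eq_of_tf {G : Type*} [Group G] (H : Subgroup G)
    (h : (∀ g : Abelianization ↥H, g ≠ 1 → ¬IsOfFinOrder g)) : rdsSucc H = ⁅H, H⁆ := by
  have ht : CommGroup.torsion (Abelianization ↥H) = ⊥ :=
    (Subgroup.eq_bot_iff_forall _).mpr fun g hg => not_not.mp fun hne => h g hne hg
  have hc : ((⊥ : Subgroup (Abelianization ↥H)).comap Abelianization.of) = commutator ↥H := by
    ext z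
    rw [Subgroup.mem_comap, Subgroup.mem_bot]
    exact QuotientGroup.eq_one_iff z
  rw [rdsSucc, ht, hc, map_subtype_commutator]


/-! ### Braid relations in `B4` -/

theorem mkrel {r : FreeGroup (Fin 3)} (h : r ∈ braidRels) :
    PresentedGroup.mk braidRels r = (1 : PresentedGroup braidRels) :=
  (QuotientGroup.eq_one_iff r).mpr (Subgroup.subset_normalClosure h)

theorem rel13 : sigma 0 * sigma 2 = sigma 2 * sigma 0 := by
  have h := mkrel (Set.mem_insert _ _)
  rw [map_mul, map_inv, map_mul, mul_inv_eq_one] at h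
  exact h

theorem rel121 : sigma 0 * sigma 1 * sigma 0 = sigma 1 * sigma 0 * sigma 1 := by
  have h := mkrel (Set.mem_insert_of_mem _ (Set.mem_insert _ _))
  rw [map_mul, map_mul, map_inv, map_mul, map_mul, mul_inv_eq_one] at h
  exact h

theorem rel232 : sigma 1 * sigma 2 * sigma 1 = sigma 2 * sigma 1 * sigma 2 := by
  have h := mkrel (Set.mem_insert_of_mem _ (Set.mem_insert_of_mem _ rfl))
  rw [map_mul, map_mul, map_inv, map_mul, map_mul, mul_inv_eq_one] at h
  exact h

/-- `u = σ₃σ₁⁻¹`. -/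
def uElt : B4 := sigma 2 * (sigma 0)⁻¹

theorem inv_comm13 : (sigma 0)⁻¹ * sigma 2 = sigma 2 * (sigma 0)⁻¹ := by
  calc (sigma 0)⁻¹ * sigma 2
      = (sigma 0)⁻¹ * (sigma 2 * sigma 0) * (sigma 0)⁻¹ := by group
    _ = (sigma 0)⁻¹ * (sigma 0 * sigma 2) * (sigma 0)⁻¹ := by rw [← rel13]
    _ = sigma 2 * (sigma 0)⁻¹ := by group

theorem conj_q : sigma 0 * qElt * (sigma 0)⁻¹ = pElt⁻¹ * qElt := by
  unfold qElt pElt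
  calc sigma 0 * (sigma 0 * sigma 1 * (sigma 0)⁻¹ * (sigma 0)⁻¹) * (sigma 0)⁻¹
      = sigma 0 * (sigma 1)⁻¹ * (sigma 1 * sigma 0 * sigma 1) * (sigma 0)⁻¹ * (sigma 0)⁻¹
          * (sigma 0)⁻¹ := by group
    _ = sigma 0 * (sigma 1)⁻¹ * (sigma 0 * sigma 1 * sigma 0) * (sigma 0)⁻¹ * (sigma 0)⁻¹
          * (sigma 0)⁻¹ := by rw [← rel121]
    _ = (sigma 1 * (sigma 0)⁻¹)⁻¹ * (sigma 0 * sigma 1 * (sigma 0)⁻¹ * (sigma 0)⁻¹) := by group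

theorem conj_p' : (sigma 0)⁻¹ * pElt * sigma 0 = pElt * qElt⁻¹ := by
  unfold pElt qElt
  calc (sigma 0)⁻¹ * (sigma 1 * (sigma 0)⁻¹) * sigma 0
      = (sigma 0)⁻¹ * (sigma 1 * sigma 0 * sigma 1) * (sigma 1)⁻¹ * (sigma 0)⁻¹ := by group
    _ = (sigma 0)⁻¹ * (sigma 0 * sigma 1 * sigma 0) * (sigma 1)⁻¹ * (sigma 0)⁻¹ := by
        rw [← rel121]
    _ = (sigma 1 * (sigma 0)⁻¹) * (sigma 0 * sigma 1 * (sigma 0)⁻¹ * (sigma 0)⁻¹)⁻¹ := by group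

theorem conj_p : sigma 0 * pElt * (sigma 0)⁻¹ = qElt := by
  unfold pElt qElt; group

theorem conj_q' : (sigma 0)⁻¹ * qElt * sigma 0 = pElt := by
  unfold pElt qElt; group

theorem delta_conj0 : (sigma 0 * sigma 1 * sigma 2) * sigma 0 = sigma 1 * (sigma 0 * sigma 1 * sigma 2) := by
  calc sigma 0 * sigma 1 * sigma 2 * sigma 0
      = sigma 0 * sigma 1 * (sigma 2 * sigma 0) := by group
    _ = sigma 0 * sigma 1 * (sigma 0 * sigma 2) := by rw [← rel13]
    _ = sigma 0 * sigma 1 * sigma 0 * sigma 2 := by group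
    _ = sigma 1 * sigma 0 * sigma 1 * sigma 2 := by rw [rel121]
    _ = sigma 1 * (sigma 0 * sigma 1 * sigma 2) := by group

theorem delta_conj1 : (sigma 0 * sigma 1 * sigma 2) * sigma 1 = sigma 2 * (sigma 0 * sigma 1 * sigma 2) := by
  calc sigma 0 * sigma 1 * sigma 2 * sigma 1
      = sigma 0 * (sigma 1 * sigma 2 * sigma 1) := by group
    _ = sigma 0 * (sigma 2 * sigma 1 * sigma 2) := by rw [rel232]
    _ = (sigma 0 * sigma 2) * (sigma 1 * sigma 2) := by group
    _ = (sigma 2 * sigma 0) * (sigma 1 * sigma 2) := by rw [rel13]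
    _ = sigma 2 * (sigma 0 * sigma 1 * sigma 2) := by group

theorem hpH : pElt ∈ commutator B4 := by
  have hcomm : pElt = ⁅sigma 0 * sigma 1 * sigma 2, sigma 0⁆ := by
    rw [commutatorElement_def]
    calc pElt
        = sigma 1 * (sigma 0 * sigma 1 * sigma 2) * (sigma 0 * sigma 1 * sigma 2)⁻¹
            * (sigma 0)⁻¹ := by unfold pElt; group
      _ = (sigma 0 * sigma 1 * sigma 2) * sigma 0 * (sigma 0 * sigma 1 * sigma 2)⁻¹
            * (sigma 0)⁻¹ := by rw [← delta_conj0]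
  rw [hcomm, _root_.commutator_def]
  exact Subgroup.commutator_mem_commutator (Subgroup.mem_top _) (Subgroup.mem_top _)

theorem huH : uElt ∈ commutator B4 := by
  have hcomm : uElt = ⁅(sigma 0 * sigma 1 * sigma 2) * (sigma 0 * sigma 1 * sigma 2), sigma 0⁆ := by
    rw [commutatorElement_def]
    have : (sigma 0 * sigma 1 * sigma 2) * (sigma 0 * sigma 1 * sigma 2) * sigma 0
          * ((sigma 0 * sigma 1 * sigma 2) * (sigma 0 * sigma 1 * sigma 2))⁻¹ * (sigma 0)⁻¹
        = (sigma 0 * sigma 1 * sigma 2) * ((sigma 0 * sigma 1 * sigma 2) * sigma 0)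
          * (sigma 0 * sigma 1 * sigma 2)⁻¹ * (sigma 0 * sigma 1 * sigma 2)⁻¹ * (sigma 0)⁻¹ := by
      group
    rw [this, delta_conj0]
    calc uElt
        = (sigma 0 * sigma 1 * sigma 2) * sigma 1 * (sigma 0 * sigma 1 * sigma 2)⁻¹
            * ((sigma 0 * sigma 1 * sigma 2) * (sigma 0 * sigma 1 * sigma 2)⁻¹) * (sigma 0)⁻¹ := by
          rw [delta_conj1]; unfold uElt; group
      _ = sigma 0 * sigma 1 * sigma 2 * (sigma 1 * (sigma 0 * sigma 1 * sigma 2))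
            * (sigma 0 * sigma 1 * sigma 2)⁻¹ * (sigma 0 * sigma 1 * sigma 2)⁻¹ * (sigma 0)⁻¹ := by
          group
  rw [hcomm, _root_.commutator_def]
  exact Subgroup.commutator_mem_commutator (Subgroup.mem_top _) (Subgroup.mem_top _)

theorem hqH : qElt ∈ commutator B4 := by
  rw [← conj_p]
  exact Subgroup.Normal.conj_mem inferInstance pElt hpH (sigma 0)

/-! ### `u ∈ [B₄', B₄']` -/

theorem L1 : pElt * uElt * pElt⁻¹ = sigma 1 * uElt * (sigma 1)⁻¹ := by
  unfold pElt uElt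
  calc sigma 1 * (sigma 0)⁻¹ * (sigma 2 * (sigma 0)⁻¹) * (sigma 1 * (sigma 0)⁻¹)⁻¹
      = sigma 1 * ((sigma 0)⁻¹ * sigma 2) * (sigma 1)⁻¹ := by group
    _ = sigma 1 * (sigma 2 * (sigma 0)⁻¹) * (sigma 1)⁻¹ := by rw [inv_comm13]

theorem rel121inv : (sigma 0)⁻¹ * (sigma 1)⁻¹ * (sigma 0)⁻¹
    = (sigma 1)⁻¹ * (sigma 0)⁻¹ * (sigma 1)⁻¹ := by
  calc (sigma 0)⁻¹ * (sigma 1)⁻¹ * (sigma 0)⁻¹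
      = (sigma 0)⁻¹ * (sigma 1)⁻¹ * (sigma 0)⁻¹ * (sigma 1 * sigma 0 * sigma 1)
          * ((sigma 1)⁻¹ * (sigma 0)⁻¹ * (sigma 1)⁻¹) := by group
    _ = (sigma 0)⁻¹ * (sigma 1)⁻¹ * (sigma 0)⁻¹ * (sigma 0 * sigma 1 * sigma 0)
          * ((sigma 1)⁻¹ * (sigma 0)⁻¹ * (sigma 1)⁻¹) := by rw [← rel121]
    _ = (sigma 1)⁻¹ * (sigma 0)⁻¹ * (sigma 1)⁻¹ := by group

theorem rel232conj : (sigma 2)⁻¹ * sigma 1 * sigma 2 = sigma 1 * sigma 2 * (sigma 1)⁻¹ := by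
  calc (sigma 2)⁻¹ * sigma 1 * sigma 2
      = (sigma 2)⁻¹ * (sigma 1 * sigma 2 * sigma 1) * (sigma 1)⁻¹ := by group
    _ = (sigma 2)⁻¹ * (sigma 2 * sigma 1 * sigma 2) * (sigma 1)⁻¹ := by rw [rel232]
    _ = sigma 1 * sigma 2 * (sigma 1)⁻¹ := by group

theorem L2 : qElt * uElt * qElt⁻¹ = uElt⁻¹ * (sigma 1 * uElt * (sigma 1)⁻¹) := by
  have e1 : (sigma 0)⁻¹ * uElt * sigma 0 = uElt := by
    unfold uElt
    calc (sigma 0)⁻¹ * (sigma 2 * (sigma 0)⁻¹) * sigma 0 = (sigma 0)⁻¹ * sigma 2 := by group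
      _ = sigma 2 * (sigma 0)⁻¹ := inv_comm13
  have e2 : qElt = sigma 0 * pElt * (sigma 0)⁻¹ := conj_p.symm
  have e3 : sigma 0 * (sigma 1 * uElt * (sigma 1)⁻¹) * (sigma 0)⁻¹
      = uElt⁻¹ * (sigma 1 * uElt * (sigma 1)⁻¹) := by
    unfold uElt
    calc sigma 0 * (sigma 1 * (sigma 2 * (sigma 0)⁻¹) * (sigma 1)⁻¹) * (sigma 0)⁻¹
        = sigma 0 * sigma 1 * sigma 2 * ((sigma 0)⁻¹ * (sigma 1)⁻¹ * (sigma 0)⁻¹) := by group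
      _ = sigma 0 * sigma 1 * sigma 2 * ((sigma 1)⁻¹ * (sigma 0)⁻¹ * (sigma 1)⁻¹) := by
          rw [rel121inv]
      _ = sigma 0 * (sigma 1 * sigma 2 * (sigma 1)⁻¹) * ((sigma 0)⁻¹ * (sigma 1)⁻¹) := by group
      _ = sigma 0 * ((sigma 2)⁻¹ * sigma 1 * sigma 2) * ((sigma 0)⁻¹ * (sigma 1)⁻¹) := by
          rw [← rel232conj]
      _ = (sigma 2 * (sigma 0)⁻¹)⁻¹ * (sigma 1 * (sigma 2 * (sigma 0)⁻¹) * (sigma 1)⁻¹) := by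
          group
  calc qElt * uElt * qElt⁻¹
      = sigma 0 * (pElt * ((sigma 0)⁻¹ * uElt * sigma 0) * pElt⁻¹) * (sigma 0)⁻¹ := by
        rw [e2]; group
    _ = sigma 0 * (pElt * uElt * pElt⁻¹) * (sigma 0)⁻¹ := by rw [e1]
    _ = sigma 0 * (sigma 1 * uElt * (sigma 1)⁻¹) * (sigma 0)⁻¹ := by rw [L1]
    _ = uElt⁻¹ * (sigma 1 * uElt * (sigma 1)⁻¹) := e3

theorem u_key : uElt = ⁅pElt, uElt⁆ * ⁅qElt, uElt⁆⁻¹ := by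
  rw [commutatorElement_def, commutatorElement_def]
  have h : pElt * uElt * pElt⁻¹ * uElt⁻¹ * (qElt * uElt * qElt⁻¹ * uElt⁻¹)⁻¹
      = (pElt * uElt * pElt⁻¹) * uElt⁻¹ * uElt * (qElt * uElt * qElt⁻¹)⁻¹ := by group
  rw [h, L1, L2]
  group

theorem u_in_comm2 : uElt ∈ ⁅commutator B4, commutator B4⁆ := by
  rw [u_key]
  exact mul_mem (Subgroup.commutator_mem_commutator hpH huH)
    (inv_mem (Subgroup.commutator_mem_commutator hqH huH))

/-! ### The subgroup `D = ⟨p, q, [B₄',B₄']⟩` equals `B₄'` -/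

/-- The subgroup generated by `p`, `q` and the second derived subgroup. -/
def DD : Subgroup B4 :=
  Subgroup.closure ({pElt, qElt} ∪ (⁅commutator B4, commutator B4⁆ : Subgroup B4))

theorem hpD : pElt ∈ DD :=
  Subgroup.subset_closure (Set.mem_union_left _ (Set.mem_insert _ _))

theorem hqD : qElt ∈ DD :=
  Subgroup.subset_closure (Set.mem_union_left _ (Set.mem_insert_of_mem _ rfl))

theorem hcommD {y : B4} (hy : y ∈ ⁅commutator B4, commutator B4⁆) : y ∈ DD :=
  Subgroup.subset_closure (Set.mem_union_right _ hy)

theorem conj_mem_DD (g : B4) (hgp : g * pElt * g⁻¹ ∈ DD) (hgq : g * qElt * g⁻¹ ∈ DD) :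
    ∀ x ∈ DD, g * x * g⁻¹ ∈ DD := by
  intro x hx
  refine Subgroup.closure_induction (p := fun y _ => g * y * g⁻¹ ∈ DD) ?_ ?_ ?_ ?_ hx
  · intro y hy
    rcases hy with hy | hy
    · rcases hy with rfl | hy
      · exact hgp
      · rw [Set.mem_singleton_iff] at hy; subst hy; exact hgq
    · rw [SetLike.mem_coe] at hy
      exact hcommD (Subgroup.Normal.conj_mem inferInstance y hy g)
  · show g * 1 * g⁻¹ ∈ DD
    have h1 : g * 1 * g⁻¹ = (1 : B4) := by group
    rw [h1]; exact one_mem DD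
  · intro a b _ _ ha hb
    show g * (a * b) * g⁻¹ ∈ DD
    have h1 : g * (a * b) * g⁻¹ = (g * a * g⁻¹) * (g * b * g⁻¹) := by group
    rw [h1]; exact mul_mem ha hb
  · intro a _ ha
    show g * a⁻¹ * g⁻¹ ∈ DD
    have h1 : g * a⁻¹ * g⁻¹ = (g * a * g⁻¹)⁻¹ := by group
    rw [h1]; exact inv_mem ha

theorem s0_mem_normalizer : sigma 0 ∈ Subgroup.normalizer (DD : Set B4) := by
  have hfwd : ∀ x ∈ DD, sigma 0 * x * (sigma 0)⁻¹ ∈ DD := by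
    refine conj_mem_DD (sigma 0) ?_ ?_
    · rw [conj_p]; exact hqD
    · rw [conj_q]; exact mul_mem (inv_mem hpD) hqD
  have hbwd : ∀ x ∈ DD, (sigma 0)⁻¹ * x * ((sigma 0)⁻¹)⁻¹ ∈ DD := by
    refine conj_mem_DD (sigma 0)⁻¹ ?_ ?_
    · have h1 : (sigma 0)⁻¹ * pElt * ((sigma 0)⁻¹)⁻¹ = (sigma 0)⁻¹ * pElt * sigma 0 := by group
      rw [h1, conj_p']; exact mul_mem hpD (inv_mem hqD)
    · have h1 : (sigma 0)⁻¹ * qElt * ((sigma 0)⁻¹)⁻¹ = (sigma 0)⁻¹ * qElt * sigma 0 := by group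
      rw [h1, conj_q']; exact hpD
  rw [Subgroup.mem_normalizer_iff]
  intro h
  constructor
  · exact hfwd h
  · intro hh
    have h2 := hbwd _ hh
    have h3 : (sigma 0)⁻¹ * (sigma 0 * h * (sigma 0)⁻¹) * ((sigma 0)⁻¹)⁻¹ = h := by group
    rwa [h3] at h2

theorem B4_closure_top : Subgroup.closure (Set.range sigma) = (⊤ : Subgroup B4) :=
  PresentedGroup.closure_range_of braidRels

theorem DD_normal : DD.Normal := by
  rw [← Subgroup.normalizer_eq_top_iff, eq_top_iff, ← B4_closure_top]
  rw [Subgroup.closure_le]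
  rintro _ ⟨i, rfl⟩
  fin_cases i
  · exact s0_mem_normalizer
  · show sigma 1 ∈ Subgroup.normalizer (DD : Set B4)
    have h1 : sigma 1 = pElt * sigma 0 := by unfold pElt; group
    rw [h1]
    exact mul_mem (Subgroup.le_normalizer hpD) s0_mem_normalizer
  · show sigma 2 ∈ Subgroup.normalizer (DD : Set B4)
    have h1 : sigma 2 = uElt * sigma 0 := by unfold uElt; group
    rw [h1]
    exact mul_mem (Subgroup.le_normalizer (hcommD u_in_comm2)) s0_mem_normalizer

theorem comm_le_DD : commutator B4 ≤ DD := by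
  haveI := DD_normal
  have hgenQ : ∀ z : B4 ⧸ DD, z ∈ Subgroup.zpowers ((QuotientGroup.mk' DD) (sigma 0)) := by
    intro z
    obtain ⟨x, rfl⟩ := QuotientGroup.mk'_surjective DD z
    have hx : x ∈ Subgroup.closure (Set.range sigma) := by
      rw [B4_closure_top]; exact Subgroup.mem_top x
    refine Subgroup.closure_induction
      (p := fun y _ => (QuotientGroup.mk' DD) y ∈ Subgroup.zpowers ((QuotientGroup.mk' DD) (sigma 0)))
      ?_ ?_ ?_ ?_ hx
    · rintro _ ⟨i, rfl⟩
      fin_cases i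
      · exact Subgroup.mem_zpowers _
      · show (QuotientGroup.mk' DD) (sigma 1) ∈ Subgroup.zpowers ((QuotientGroup.mk' DD) (sigma 0))
        have e : sigma 1 = pElt * sigma 0 := by unfold pElt; group
        have hp1 : (QuotientGroup.mk' DD) pElt = 1 := (QuotientGroup.eq_one_iff _).mpr hpD
        have h1 : (QuotientGroup.mk' DD) (sigma 1) = (QuotientGroup.mk' DD) (sigma 0) := by
          rw [e, map_mul, hp1, one_mul]
        rw [h1]; exact Subgroup.mem_zpowers _
      · show (QuotientGroup.mk' DD) (sigma 2) ∈ Subgroup.zpowers ((QuotientGroup.mk' DD) (sigma 0))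
        have e : sigma 2 = uElt * sigma 0 := by unfold uElt; group
        have hu1 : (QuotientGroup.mk' DD) uElt = 1 :=
          (QuotientGroup.eq_one_iff _).mpr (hcommD u_in_comm2)
        have h1 : (QuotientGroup.mk' DD) (sigma 2) = (QuotientGroup.mk' DD) (sigma 0) := by
          rw [e, map_mul, hu1, one_mul]
        rw [h1]; exact Subgroup.mem_zpowers _
    · show (QuotientGroup.mk' DD) 1 ∈ Subgroup.zpowers ((QuotientGroup.mk' DD) (sigma 0))
      rw [map_one]; exact one_mem _
    · intro a b _ _ ha hb
      show (QuotientGroup.mk' DD) (a * b) ∈ Subgroup.zpowers ((QuotientGroup.mk' DD) (sigma 0))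
      rw [map_mul]; exact mul_mem ha hb
    · intro a _ ha
      show (QuotientGroup.mk' DD) a⁻¹ ∈ Subgroup.zpowers ((QuotientGroup.mk' DD) (sigma 0))
      rw [map_inv]; exact inv_mem ha
  have hcommQ : ∀ x y : B4, ⁅x, y⁆ ∈ DD := by
    intro x y
    have h : (QuotientGroup.mk' DD) ⁅x, y⁆ = 1 := by
      rw [map_commutatorElement, commutatorElement_eq_one_iff_commute]
      obtain ⟨m, hm⟩ := Subgroup.mem_zpowers_iff.mp (hgenQ ((QuotientGroup.mk' DD) x))
      obtain ⟨n, hn⟩ := Subgroup.mem_zpowers_iff.mp (hgenQ ((QuotientGroup.mk' DD) y))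
      rw [← hm, ← hn]
      exact Commute.zpow_zpow (Commute.refl _) m n
    exact (QuotientGroup.eq_one_iff _).mp h
  rw [_root_.commutator_def]
  exact Subgroup.commutator_le.mpr fun x _ y _ => hcommQ x y

/-! ### `Abelianization B4` is torsion-free -/

theorem hrelsE : ∀ r ∈ braidRels,
    FreeGroup.lift (fun _ : Fin 3 => Multiplicative.ofAdd (1 : ℤ)) r = 1 := by
  intro r hr
  simp only [braidRels, Set.mem_insert_iff, Set.mem_singleton_iff] at hr
  rcases hr with rfl | rfl | rfl <;>
    · simp only [map_mul, map_inv, FreeGroup.lift_apply_of]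
      group

/-- The exponent-sum homomorphism `B4 →* ℤ`. -/
def eHom : B4 →* Multiplicative ℤ := PresentedGroup.toGroup hrelsE

theorem eHom_sigma (i : Fin 3) : eHom (sigma i) = Multiplicative.ofAdd (1 : ℤ) :=
  PresentedGroup.toGroup.of hrelsE

theorem ab_of_u : Abelianization.of uElt = 1 := (QuotientGroup.eq_one_iff _).mpr huH

theorem ab01 : Abelianization.of (sigma 1) = Abelianization.of (sigma 0) := by
  have h : Abelianization.of (sigma 0) * Abelianization.of (sigma 1) * Abelianization.of (sigma 0)
      = Abelianization.of (sigma 1) * Abelianization.of (sigma 0) * Abelianization.of (sigma 1) := by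
    rw [← map_mul, ← map_mul, ← map_mul, ← map_mul, rel121]
  rw [mul_comm (Abelianization.of (sigma 0)) (Abelianization.of (sigma 1))] at h
  exact (mul_left_cancel h).symm

theorem ab20 : Abelianization.of (sigma 2) = Abelianization.of (sigma 0) := by
  have e : sigma 2 = uElt * sigma 0 := by unfold uElt; group
  rw [e, map_mul, ab_of_u, one_mul]

theorem ab_gen (a : Abelianization B4) :
    ∃ n : ℤ, a = (Abelianization.of (sigma 0)) ^ n := by
  have hsur : Function.Surjective (Abelianization.of : B4 →* Abelianization B4) :=
    fun b => QuotientGroup.induction_on b fun x => ⟨x, rfl⟩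
  obtain ⟨x, rfl⟩ := hsur a
  have hx : x ∈ Subgroup.closure (Set.range sigma) := by
    rw [B4_closure_top]; exact Subgroup.mem_top x
  refine Subgroup.closure_induction
    (p := fun y _ => ∃ n : ℤ, Abelianization.of y = (Abelianization.of (sigma 0)) ^ n)
    ?_ ?_ ?_ ?_ hx
  · rintro _ ⟨i, rfl⟩
    fin_cases i
    · refine ⟨1, ?_⟩
      show Abelianization.of (sigma 0) = Abelianization.of (sigma 0) ^ (1 : ℤ)
      rw [zpow_one]
    · refine ⟨1, ?_⟩
      show Abelianization.of (sigma 1) = Abelianization.of (sigma 0) ^ (1 : ℤ)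
      rw [zpow_one]; exact ab01
    · refine ⟨1, ?_⟩
      show Abelianization.of (sigma 2) = Abelianization.of (sigma 0) ^ (1 : ℤ)
      rw [zpow_one]; exact ab20
  · exact ⟨0, by rw [zpow_zero, map_one]⟩
  · rintro a b _ _ ⟨m, hm⟩ ⟨n, hn⟩
    exact ⟨m + n, by rw [map_mul, hm, hn, zpow_add]⟩
  · rintro a _ ⟨m, hm⟩
    exact ⟨-m, by rw [map_inv, hm, zpow_neg]⟩

theorem tf1 : (∀ g : Abelianization B4, g ≠ 1 → ¬IsOfFinOrder g) := by
  intro a ha hfin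
  obtain ⟨n, rfl⟩ := ab_gen a
  have hn : n ≠ 0 := by rintro rfl; exact ha (zpow_zero _)
  have hval : (Abelianization.lift eHom) ((Abelianization.of (sigma 0)) ^ n)
      = Multiplicative.ofAdd n := by
    rw [map_zpow, Abelianization.lift_apply_of, eHom_sigma, ← ofAdd_zsmul]
    norm_num
  have hfin2 := (Abelianization.lift eHom).isOfFinOrder hfin
  rw [hval] at hfin2
  refine tfMultZ (Multiplicative.ofAdd n) ?_ hfin2
  intro h
  exact hn (by simpa using congrArg Multiplicative.toAdd h)

theorem tfTop : (∀ g : Abelianization ↥(⊤ : Subgroup B4), g ≠ 1 → ¬IsOfFinOrder g) :=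
  tf_of_injective (f := (Subgroup.topEquiv.abelianizationCongr).toMonoidHom)
    (Subgroup.topEquiv.abelianizationCongr).injective tf1

/-! ### The metabelian quotient `ℤ² ⋊ ℤ` -/

def mAdd : (ℤ × ℤ) ≃+ (ℤ × ℤ) where
  toFun p := (-p.2, p.1 + p.2)
  invFun p := (p.1 + p.2, -p.1)
  left_inv p := by simp [Prod.ext_iff]
  right_inv p := by simp [Prod.ext_iff]
  map_add' p q := by
    simp only [Prod.ext_iff, Prod.fst_add, Prod.snd_add, neg_add]
    exact ⟨trivial, by ring⟩

def muA : MulAut (Multiplicative (ℤ × ℤ)) := AddEquiv.toMultiplicative mAdd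

def phiAct : Multiplicative ℤ →* MulAut (Multiplicative (ℤ × ℤ)) := zpowersHom _ muA

abbrev GG := SemidirectProduct (Multiplicative (ℤ × ℤ)) (Multiplicative ℤ) phiAct

def fgen : Fin 3 → GG :=
  fun i => ⟨if i = 1 then Multiplicative.ofAdd ((1 : ℤ), (0 : ℤ)) else 1, Multiplicative.ofAdd 1⟩

theorem hrelsG : ∀ r ∈ braidRels, FreeGroup.lift fgen r = 1 := by
  intro r hr
  simp only [braidRels, Set.mem_insert_iff, Set.mem_singleton_iff] at hr
  rcases hr with rfl | rfl | rfl <;>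
    · simp only [map_mul, map_inv, FreeGroup.lift_apply_of]
      rw [mul_inv_eq_one]
      decide

/-- The metabelian representation `B4 →* ℤ² ⋊ ℤ`. -/
def Phi : B4 →* GG := PresentedGroup.toGroup hrelsG

theorem Phi_sigma (i : Fin 3) : Phi (sigma i) = fgen i :=
  PresentedGroup.toGroup.of hrelsG

theorem Phi_p : Phi pElt = ⟨Multiplicative.ofAdd ((1 : ℤ), (0 : ℤ)), 1⟩ := by
  show Phi (sigma 1 * (sigma 0)⁻¹) = _
  rw [map_mul, map_inv, Phi_sigma, Phi_sigma]
  decide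

theorem Phi_q : Phi qElt = ⟨Multiplicative.ofAdd ((0 : ℤ), (1 : ℤ)), 1⟩ := by
  show Phi (sigma 0 * sigma 1 * (sigma 0)⁻¹ * (sigma 0)⁻¹) = _
  rw [map_mul, map_mul, map_mul, map_inv, Phi_sigma, Phi_sigma]
  decide

theorem Phi_right {x : B4} (hx : x ∈ commutator B4) : (Phi x).right = 1 := by
  have h := Abelianization.commutator_subset_ker
    (MonoidHom.comp SemidirectProduct.rightHom Phi) hx
  rw [MonoidHom.mem_ker, MonoidHom.comp_apply] at h
  exact h

/-- Projection of `Φ` restricted to `B4'`, with values in `ℤ²`. -/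
def psi0 : ↥(commutator B4) →* Multiplicative (ℤ × ℤ) where
  toFun x := (Phi x.1).left
  map_one' := by
    show (Phi 1).left = 1
    rw [map_one]; rfl
  map_mul' x y := by
    show (Phi (x.1 * y.1)).left = (Phi x.1).left * (Phi y.1).left
    rw [map_mul, SemidirectProduct.mul_left, Phi_right x.2]
    simp

def psi : Abelianization ↥(commutator B4) →* Multiplicative (ℤ × ℤ) :=
  Abelianization.lift psi0

/-- class of `p` in the abelianization of `B4'`. -/
def pb : Abelianization ↥(commutator B4) := Abelianization.of ⟨pElt, hpH⟩

/-- class of `q` in the abelianization of `B4'`. -/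
def qb : Abelianization ↥(commutator B4) := Abelianization.of ⟨qElt, hqH⟩

theorem psi_pb : psi pb = Multiplicative.ofAdd ((1 : ℤ), (0 : ℤ)) := by
  show psi (Abelianization.of ⟨pElt, hpH⟩) = _
  rw [psi, Abelianization.lift_apply_of]
  show (Phi pElt).left = _
  rw [Phi_p]

theorem psi_qb : psi qb = Multiplicative.ofAdd ((0 : ℤ), (1 : ℤ)) := by
  show psi (Abelianization.of ⟨qElt, hqH⟩) = _
  rw [psi, Abelianization.lift_apply_of]
  show (Phi qElt).left = _
  rw [Phi_q]

/-! ### Generation of `H₁(B₄')` by `p`, `q`, and conclusion -/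

theorem of_eq_one_of_mem_comm2 {y : B4} (hy : y ∈ ⁅commutator B4, commutator B4⁆)
    (hmem : y ∈ commutator B4) :
    Abelianization.of (⟨y, hmem⟩ : ↥(commutator B4)) = 1 := by
  have hker : Abelianization.of (⟨y, hmem⟩ : ↥(commutator B4)) = 1 ↔
      (⟨y, hmem⟩ : ↥(commutator B4)) ∈ commutator ↥(commutator B4) :=
    QuotientGroup.eq_one_iff _
  rw [hker]
  rw [← map_subtype_commutator (commutator B4)] at hy
  obtain ⟨z, hz, hzy⟩ := hy
  have : (⟨y, hmem⟩ : ↥(commutator B4)) = z := Subtype.ext hzy.symm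
  rw [this]
  exact hz

theorem gen_ab (x : ↥(commutator B4)) :
    ∃ m n : ℤ, Abelianization.of x = pb ^ m * qb ^ n := by
  have hxD : (x : B4) ∈ DD := comm_le_DD x.2
  have key := Subgroup.closure_induction
    (p := fun y _ => ∃ (hy : y ∈ commutator B4) (m n : ℤ),
      Abelianization.of (⟨y, hy⟩ : ↥(commutator B4)) = pb ^ m * qb ^ n)
    ?_ ?_ ?_ ?_ hxD
  · obtain ⟨hy, m, n, h⟩ := key
    exact ⟨m, n, by rw [show x = ⟨(x : B4), hy⟩ from Subtype.ext rfl]; exact h⟩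
  · intro y hy
    rcases hy with hy | hy
    · rcases hy with rfl | hy
      · exact ⟨hpH, 1, 0, by rw [zpow_one, zpow_zero, mul_one]; rfl⟩
      · rw [Set.mem_singleton_iff] at hy; subst hy
        exact ⟨hqH, 0, 1, by rw [zpow_one, zpow_zero, one_mul]; rfl⟩
    · rw [SetLike.mem_coe] at hy
      refine ⟨Subgroup.commutator_le_left _ _ hy, 0, 0, ?_⟩
      rw [zpow_zero, zpow_zero, mul_one]
      exact of_eq_one_of_mem_comm2 hy _
  · refine ⟨one_mem _, 0, 0, ?_⟩
    rw [zpow_zero, zpow_zero, mul_one, show (⟨1, one_mem _⟩ : ↥(commutator B4)) = 1 from rfl,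
      map_one]
  · rintro a b _ _ ⟨ha, m1, n1, e1⟩ ⟨hb, m2, n2, e2⟩
    refine ⟨mul_mem ha hb, m1 + m2, n1 + n2, ?_⟩
    rw [show (⟨a * b, mul_mem ha hb⟩ : ↥(commutator B4)) = ⟨a, ha⟩ * ⟨b, hb⟩ from rfl,
      map_mul, e1, e2, zpow_add, zpow_add, mul_mul_mul_comm]
  · rintro a _ ⟨ha, m, n, e⟩
    refine ⟨inv_mem ha, -m, -n, ?_⟩
    rw [show (⟨a⁻¹, inv_mem ha⟩ : ↥(commutator B4)) = (⟨a, ha⟩ : ↥(commutator B4))⁻¹ from rfl,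
      map_inv, e, mul_inv, zpow_neg, zpow_neg]

theorem psi_injective : Function.Injective psi := by
  rw [injective_iff_map_eq_one]
  intro a ha
  have hsur : Function.Surjective
      (Abelianization.of : ↥(commutator B4) →* Abelianization ↥(commutator B4)) :=
    fun b => QuotientGroup.induction_on b fun x => ⟨x, rfl⟩
  obtain ⟨x, rfl⟩ := hsur a
  obtain ⟨m, n, hmn⟩ := gen_ab x
  rw [hmn] at ha ⊢
  rw [map_mul, map_zpow, map_zpow, psi_pb, psi_qb] at ha
  have h1 := congrArg Multiplicative.toAdd ha
  rw [toAdd_mul, toAdd_zpow, toAdd_zpow, toAdd_one, toAdd_ofAdd, toAdd_ofAdd] at h1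
  have hm : m = 0 := by
    have := congrArg Prod.fst h1
    simpa using this
  have hn : n = 0 := by
    have := congrArg Prod.snd h1
    simpa using this
  rw [hm, hn, zpow_zero, zpow_zero, mul_one]

theorem tf2 : (∀ g : Abelianization ↥(commutator B4), g ≠ 1 → ¬IsOfFinOrder g) :=
  tf_of_injective psi_injective tfMultZZ

theorem rds_one : rds B4 1 = commutator B4 := by
  show rdsSucc (rds B4 0) = commutator B4
  rw [show rds B4 0 = (⊤ : Subgroup B4) from rfl, rdsSucc_eq_of_tf _ tfTop,
    ← _root_.commutator_def]

theorem rds_two : rds B4 2 = ⁅commutator B4, commutator B4⁆ := by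
  show rdsSucc (rds B4 1) = _
  rw [rds_one, rdsSucc_eq_of_tf _ tf2]

end Braid4Aux


/-- Since `B₄'/B₄''` is torsion-free, the second term of the rational derived
series of the braid group `B₄` coincides with the second derived subgroup:
`(B₄)_r^{(2)} = [[B₄,B₄],[B₄,B₄]]`. -/
theorem braid4_rds_two_eq_second_derived :
    (∀ g : Abelianization ↥(commutator B4), g ≠ 1 → ¬IsOfFinOrder g) ∧
    rds B4 2 = ⁅commutator B4, commutator B4⁆ := by
  exact ⟨Braid4Aux.tf2, Braid4Aux.rds_two⟩
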